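/- arXiv:2506.03457 — 5 statements merged into one kernel-verified Lean document; each statement's English description precedes it below -/
import Mathlib

section
/- Let F be a probability measure on ℝ, M : ℝ → ℝ a nonnegative measurable function, H : ℝ → ℝ differentiable with derivative h, β ∈ ℝ^k, κ ∈ ℝ^m, and σ ∈ ℝ. Define T : ℝ^k × ℝ^m → ℝ by T(x, y) = ∫ M(q)·H(⟪x, β⟫ + ⟪y, κ⟫ + σ q) dF(q). Assume that near (x₀, y₀) the integrand is F-integrable, the partial derivatives of the integrand in (x, y) are dominated by an F-integrable function of q, and K := ∫ M(q)·h(⟪x₀, β⟫ + ⟪y₀, κ⟫ + σ q) dF(q) > 0. Let B be a designated coordinate of x with β_B = 1. Then for every coordinate ω of y, ∂T/∂y_ω(x₀, y₀) = κ_ω · K and ∂T/∂x_B(x₀, y₀) = K > 0, so that κ_ω = (∂T/∂y_ω(x₀, y₀)) / (∂T/∂x_B(x₀, y₀)). -/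
/-!
The integrand depends on `(x, y)` only through the linear index `L(x, y) = ⟪x, β⟫ + ⟪y, κ⟫`, so
differentiating under the integral sign gives `DT(x₀, y₀) = K • L`. Every partial derivative of
`T` is therefore `K` times the corresponding coefficient of the index, and dividing by the one
whose coefficient is normalised to `β_B = 1` recovers `κ_ω`.
-/

open MeasureTheory Filter
open scoped RealInnerProductSpace Topology

section IndexModel

variable {E α : Type*} [NormedAddCommGroup E] [NormedSpace ℝ E] [MeasurableSpace α]
  {μ : Measure α} {H h : ℝ → ℝ}

theorem hasFDerivAt_mul_comp_add (hH : ∀ x, HasDerivAt H (h x) x) (L : E →L[ℝ] ℝ)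
    (a c : ℝ) (z : E) :
    HasFDerivAt (fun z => a * H (L z + c)) ((a * h (L z + c)) • L) z := by
  have := ((hH (L z + c)).comp_hasFDerivAt z (L.hasFDerivAt.add_const c)).const_mul a
  simpa only [Function.comp_def, smul_smul] using this

theorem hasFDerivAt_integral_mul_comp_add {M c : α → ℝ} (hM : AEStronglyMeasurable M μ)
    (hc : AEMeasurable c μ) (hH : ∀ x, HasDerivAt H (h x) x) (L : E →L[ℝ] ℝ)
    {z₀ : E} {U : Set E} (hU : U ∈ 𝓝 z₀) (hint : Integrable (fun q => M q * H (L z₀ + c q)) μ)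
    {b : α → ℝ} (hb : Integrable b μ)
    (hbound : ∀ᵐ q ∂μ, ∀ z ∈ U, ‖(M q * h (L z + c q)) • L‖ ≤ b q) :
    HasFDerivAt (fun z => ∫ q, M q * H (L z + c q) ∂μ)
      ((∫ q, M q * h (L z₀ + c q) ∂μ) • L) z₀ := by
  have hH_cont : Continuous H := continuous_iff_continuousAt.2 fun x => (hH x).continuousAt
  have hh_meas : Measurable h := by
    simpa only [funext fun x => (hH x).deriv] using measurable_deriv H
  have hmeas : ∀ z, AEStronglyMeasurable (fun q => M q * H (L z + c q)) μ := fun z =>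
    hM.mul (hH_cont.measurable.comp_aemeasurable (hc.const_add _)).aestronglyMeasurable
  have hmeas' : AEStronglyMeasurable (fun q => (M q * h (L z₀ + c q)) • L) μ :=
    (hM.mul (hh_meas.comp_aemeasurable (hc.const_add _)).aestronglyMeasurable).smul_const L
  have := hasFDerivAt_integral_of_dominated_of_fderiv_le hU (Eventually.of_forall hmeas) hint
    hmeas' hbound hb (ae_of_all _ fun q z _ => hasFDerivAt_mul_comp_add hH L _ _ z)
  rwa [integral_smul_const] at this

end IndexModel

theorem coprod_innerSL_apply {E F : Type*} [NormedAddCommGroup E] [InnerProductSpace ℝ E]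
    [NormedAddCommGroup F] [InnerProductSpace ℝ F] (β : E) (κ : F) (z : E × F) :
    (innerSL ℝ β).coprod (innerSL ℝ κ) z = ⟪z.1, β⟫ + ⟪z.2, κ⟫ := by
  simp only [ContinuousLinearMap.coprod_apply, innerSL_apply_apply, real_inner_comm]

theorem identification_of_hassle_parameters_full_model_general
    (k m : ℕ) (F : Measure ℝ)
    (M : ℝ → ℝ) (hM : Measurable M)
    (H h : ℝ → ℝ) (hH : ∀ x, HasDerivAt H (h x) x)
    (β : EuclideanSpace ℝ (Fin k)) (κ : EuclideanSpace ℝ (Fin m)) (σ : ℝ)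
    (T : EuclideanSpace ℝ (Fin k) × EuclideanSpace ℝ (Fin m) → ℝ)
    (hT : ∀ x y, T (x, y) = ∫ q, M q * H (⟪x, β⟫ + ⟪y, κ⟫ + σ * q) ∂F)
    (x₀ : EuclideanSpace ℝ (Fin k)) (y₀ : EuclideanSpace ℝ (Fin m))
    (U : Set (EuclideanSpace ℝ (Fin k) × EuclideanSpace ℝ (Fin m)))
    (hU : U ∈ nhds (x₀, y₀))
    (hint : ∀ xy ∈ U,
      Integrable (fun q => M q * H (⟪Prod.fst xy, β⟫ + ⟪Prod.snd xy, κ⟫ + σ * q)) F)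
    (b : ℝ → ℝ) (hb : Integrable b F)
    (hdom : ∀ xy ∈ U, ∀ q,
      ‖fderiv ℝ (fun z : EuclideanSpace ℝ (Fin k) × EuclideanSpace ℝ (Fin m) =>
        M q * H (⟪z.1, β⟫ + ⟪z.2, κ⟫ + σ * q)) xy‖ ≤ b q)
    (hK : 0 < ∫ q, M q * h (⟪x₀, β⟫ + ⟪y₀, κ⟫ + σ * q) ∂F)
    (B : Fin k) (hB : β B = 1) :
    (∀ ω : Fin m,
        fderiv ℝ T (x₀, y₀) (0, EuclideanSpace.single ω 1) =
          κ ω * ∫ q, M q * h (⟪x₀, β⟫ + ⟪y₀, κ⟫ + σ * q) ∂F) ∧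
      fderiv ℝ T (x₀, y₀) (EuclideanSpace.single B 1, 0) =
        ∫ q, M q * h (⟪x₀, β⟫ + ⟪y₀, κ⟫ + σ * q) ∂F ∧
      0 < fderiv ℝ T (x₀, y₀) (EuclideanSpace.single B 1, 0) ∧
      ∀ ω : Fin m,
        κ ω = fderiv ℝ T (x₀, y₀) (0, EuclideanSpace.single ω 1) /
          fderiv ℝ T (x₀, y₀) (EuclideanSpace.single B 1, 0) := by
  set K := ∫ q, M q * h (⟪x₀, β⟫ + ⟪y₀, κ⟫ + σ * q) ∂F
  set L := (innerSL ℝ β).coprod (innerSL ℝ κ)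
  have hL : ∀ z, L z = ⟪z.1, β⟫ + ⟪z.2, κ⟫ := coprod_innerSL_apply β κ
  simp only [← hL] at hint hdom
  have hT_index : T = fun z => ∫ q, M q * H (L z + σ * q) ∂F :=
    funext fun ⟨x, y⟩ => by rw [hT, hL]
  have hbound : ∀ᵐ q ∂F, ∀ z ∈ U, ‖(M q * h (L z + σ * q)) • L‖ ≤ b q :=
    ae_of_all _ fun q z hz => by
      simpa only [(hasFDerivAt_mul_comp_add hH L (M q) (σ * q) z).fderiv] using hdom z hz q
  have hDT : fderiv ℝ T (x₀, y₀) = K • L := by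
    have hint₀ := hint (x₀, y₀) (mem_of_mem_nhds hU)
    have := hasFDerivAt_integral_mul_comp_add hM.aestronglyMeasurable
      (measurable_const_mul σ).aemeasurable hH L hU hint₀ hb hbound
    rw [hT_index, this.fderiv, hL]
  have hy : ∀ ω : Fin m, fderiv ℝ T (x₀, y₀) (0, EuclideanSpace.single ω 1) = κ ω * K := by
    intro ω
    simp [hDT, hL, EuclideanSpace.inner_single_left, mul_comm]
  have hxB : fderiv ℝ T (x₀, y₀) (EuclideanSpace.single B 1, 0) = K := by
    simp [hDT, hL, EuclideanSpace.inner_single_left, hB]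
  refine ⟨hy, hxB, hxB ▸ hK, fun ω => ?_⟩
  rw [hy ω, hxB, mul_div_cancel_right₀ _ hK.ne']

/-- Theorem 2 (constructive identification of the hassle parameters): with
`T(x, y) = ∫ M(q)·H(⟪x,β⟫+⟪y,κ⟫+σq) dF(q)`,
`K = ∫ M(q)·h(⟪x₀,β⟫+⟪y₀,κ⟫+σq) dF(q) > 0`, and the normalization `β_B = 1`,
every partial derivative in `y` satisfies `∂T/∂y_ω = κ_ω·K`, `∂T/∂x_B = K > 0`,
and hence `κ_ω = (∂T/∂y_ω) / (∂T/∂x_B)` at `(x₀, y₀)`. -/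
theorem identification_of_hassle_parameters_full_model
    (k m : ℕ) (F : Measure ℝ) [IsProbabilityMeasure F]
    (M : ℝ → ℝ) (hM : Measurable M) (hMnn : ∀ q, 0 ≤ M q)
    (H h : ℝ → ℝ) (hH : ∀ x, HasDerivAt H (h x) x)
    (β : EuclideanSpace ℝ (Fin k)) (κ : EuclideanSpace ℝ (Fin m)) (σ : ℝ)
    (T : EuclideanSpace ℝ (Fin k) × EuclideanSpace ℝ (Fin m) → ℝ)
    (hT : ∀ x y, T (x, y) = ∫ q, M q * H (⟪x, β⟫ + ⟪y, κ⟫ + σ * q) ∂F)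
    (x₀ : EuclideanSpace ℝ (Fin k)) (y₀ : EuclideanSpace ℝ (Fin m))
    (U : Set (EuclideanSpace ℝ (Fin k) × EuclideanSpace ℝ (Fin m)))
    (hU : U ∈ nhds (x₀, y₀))
    (hint : ∀ xy ∈ U,
      Integrable (fun q => M q * H (⟪Prod.fst xy, β⟫ + ⟪Prod.snd xy, κ⟫ + σ * q)) F)
    (b : ℝ → ℝ) (hb : Integrable b F)
    (hdom : ∀ xy ∈ U, ∀ q,
      ‖fderiv ℝ (fun z : EuclideanSpace ℝ (Fin k) × EuclideanSpace ℝ (Fin m) =>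
        M q * H (⟪z.1, β⟫ + ⟪z.2, κ⟫ + σ * q)) xy‖ ≤ b q)
    (hK : 0 < ∫ q, M q * h (⟪x₀, β⟫ + ⟪y₀, κ⟫ + σ * q) ∂F)
    (B : Fin k) (hB : β B = 1) :
    (∀ ω : Fin m,
        fderiv ℝ T (x₀, y₀) (0, EuclideanSpace.single ω 1) =
          κ ω * ∫ q, M q * h (⟪x₀, β⟫ + ⟪y₀, κ⟫ + σ * q) ∂F) ∧
      fderiv ℝ T (x₀, y₀) (EuclideanSpace.single B 1, 0) =
        ∫ q, M q * h (⟪x₀, β⟫ + ⟪y₀, κ⟫ + σ * q) ∂F ∧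
      0 < fderiv ℝ T (x₀, y₀) (EuclideanSpace.single B 1, 0) ∧
      ∀ ω : Fin m,
        κ ω = fderiv ℝ T (x₀, y₀) (0, EuclideanSpace.single ω 1) /
          fderiv ℝ T (x₀, y₀) (EuclideanSpace.single B 1, 0) :=
  identification_of_hassle_parameters_full_model_general k m F M hM H h hH β κ σ T hT x₀ y₀ U hU
    hint b hb hdom hK B hB
end

section
/- Let F be a probability measure on ℝ, M : ℝ → ℝ a nonnegative measurable function, and G, H : ℝ → ℝ differentiable with derivatives g, h and with G strictly positive. Fix γ, β ∈ ℝ^k, c, σ₁, σ₂ ∈ ℝ, and x₀ ∈ ℝ^k. Define P_start(x) = ∫ M(q)·G(⟪x, γ⟫ + σ₁ q)·H(⟪x, β⟫ + c + σ₂ q) dF(q) and P_stay(x) = ∫ M(q)·G(⟪x₀, γ⟫ + σ₁ q)·H(⟪x, β⟫ + c + σ₂ q) dF(q). Assume that near x₀ both integrands are F-integrable and their partial derivatives in x are dominated by an F-integrable function of q. Then for each coordinate ω, ∂P_start/∂x_ω(x₀) − ∂P_stay/∂x_ω(x₀) = γ_ω · ∫ M(q)·g(⟪x₀, γ⟫ +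 σ₁ q)·H(⟪x₀, β⟫ + c + σ₂ q) dF(q). -/
/-!
Both probabilities are parametric integrals whose integrands have gradients dominated near `x₀`,
so each gradient is the integral of the pointwise gradient. By the product rule the start
integrand has gradient `M (g·H) γ + M (G·h) β`, while the stay integrand, whose attention factor
is frozen at `x₀`, has gradient `M G(⟪x₀, γ⟫ + σ₁ q) h β`. At `x₀` the two choice terms
coincide and cancel, leaving the attention term.
-/

open MeasureTheory Filter Topology ContinuousLinearMap
open scoped RealInnerProductSpace

theorem integrable_and_hasFDerivAt_integral_of_fderiv_le {α E F : Type*} [MeasurableSpace α]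
    {μ : Measure α} [NormedAddCommGroup E] [NormedSpace ℝ E] [NormedAddCommGroup F]
    [NormedSpace ℝ F] {f : E → α → F} {f' : E → α → E →L[ℝ] F} {x₀ : E} {U : Set E}
    {b : α → ℝ} (hU : U ∈ 𝓝 x₀) (hf_int : ∀ x ∈ U, Integrable (f x) μ)
    (hf'_meas : AEStronglyMeasurable (f' x₀) μ)
    (hf' : ∀ x ∈ U, ∀ q, HasFDerivAt (f · q) (f' x q) x)
    (h_bound : ∀ x ∈ U, ∀ q, ‖fderiv ℝ (f · q) x‖ ≤ b q) (hb : Integrable b μ) :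
    Integrable (f' x₀) μ ∧ HasFDerivAt (fun x ↦ ∫ q, f x q ∂μ) (∫ q, f' x₀ q ∂μ) x₀ := by
  have hf'_le : ∀ x ∈ U, ∀ q, ‖f' x q‖ ≤ b q := fun x hx q ↦
    (hf' x hx q).fderiv ▸ h_bound x hx q
  have hx₀ : x₀ ∈ U := mem_of_mem_nhds hU
  refine ⟨hb.mono' hf'_meas (.of_forall (hf'_le x₀ hx₀)), ?_⟩
  exact hasFDerivAt_integral_of_dominated_of_fderiv_le hU
    (eventually_of_mem hU fun x hx ↦ (hf_int x hx).aestronglyMeasurable) (hf_int x₀ hx₀)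
    hf'_meas (.of_forall fun q x hx ↦ hf'_le x hx q) hb (.of_forall fun q x hx ↦ hf' x hx q)

section SingleIndex

variable {E : Type*} [NormedAddCommGroup E] [InnerProductSpace ℝ E]

theorem hasFDerivAt_inner_add_const (v : E) (t : ℝ) (x : E) :
    HasFDerivAt (fun y : E ↦ ⟪y, v⟫ + t) (innerSL ℝ v) x := by
  simpa only [innerSL_apply_apply, real_inner_comm v] using (innerSL ℝ v).hasFDerivAt.add_const t

variable {G H g h : ℝ → ℝ} (hG : ∀ t, HasDerivAt G (g t) t) (hH : ∀ t, HasDerivAt H (h t) t)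
  (γ β : E) (c σ₁ σ₂ m q : ℝ) (x : E)
include hH

theorem hasFDerivAt_choice_integrand :
    HasFDerivAt (fun y ↦ m * H (⟪y, β⟫ + c + σ₂ * q))
      ((m * h (⟪x, β⟫ + c + σ₂ * q)) • innerSL ℝ β) x := by
  have hHx := (hH _).comp_hasFDerivAt x ((hasFDerivAt_inner_add_const β c x).add_const (σ₂ * q))
  simpa only [smul_smul, Function.comp_def] using hHx.const_mul m

include hG

theorem hasFDerivAt_attention_choice_integrand :
    HasFDerivAt (fun y ↦ m * G (⟪y, γ⟫ + σ₁ * q) * H (⟪y, β⟫ + c + σ₂ * q))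
      ((m * g (⟪x, γ⟫ + σ₁ * q) * H (⟪x, β⟫ + c + σ₂ * q)) • innerSL ℝ γ
        + (m * G (⟪x, γ⟫ + σ₁ * q) * h (⟪x, β⟫ + c + σ₂ * q)) • innerSL ℝ β) x := by
  have hGx := (hG _).comp_hasFDerivAt x (hasFDerivAt_inner_add_const γ (σ₁ * q) x)
  have hHx := (hH _).comp_hasFDerivAt x ((hasFDerivAt_inner_add_const β c x).add_const (σ₂ * q))
  refine ((hGx.const_mul m).mul hHx).congr_fderiv ?_
  ext v
  simp only [Function.comp_apply, add_apply, smul_apply, smul_eq_mul]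
  ring

end SingleIndex

theorem EuclideanSpace.innerSL_apply_single_one {k : ℕ} (v : EuclideanSpace ℝ (Fin k))
    (ω : Fin k) : innerSL ℝ v (EuclideanSpace.single ω 1) = v ω := by
  simp [innerSL_apply_apply, EuclideanSpace.inner_single_right]

theorem difference_identity_attention_component_general
    (k : ℕ) (F : Measure ℝ)
    (M : ℝ → ℝ) (hM : Measurable M)
    (G H g h : ℝ → ℝ)
    (hG : ∀ x, HasDerivAt G (g x) x) (hH : ∀ x, HasDerivAt H (h x) x)
    (γ β : EuclideanSpace ℝ (Fin k)) (c σ₁ σ₂ : ℝ)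
    (x₀ : EuclideanSpace ℝ (Fin k))
    (Pstart Pstay : EuclideanSpace ℝ (Fin k) → ℝ)
    (hPstart : ∀ x, Pstart x =
      ∫ q, M q * G (⟪x, γ⟫ + σ₁ * q) * H (⟪x, β⟫ + c + σ₂ * q) ∂F)
    (hPstay : ∀ x, Pstay x =
      ∫ q, M q * G (⟪x₀, γ⟫ + σ₁ * q) * H (⟪x, β⟫ + c + σ₂ * q) ∂F)
    (U : Set (EuclideanSpace ℝ (Fin k))) (hU : U ∈ nhds x₀)
    (hint_start : ∀ x ∈ U,
      Integrable (fun q => M q * G (⟪x, γ⟫ + σ₁ * q) * H (⟪x, β⟫ + c + σ₂ * q)) F)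
    (hint_stay : ∀ x ∈ U,
      Integrable (fun q => M q * G (⟪x₀, γ⟫ + σ₁ * q) * H (⟪x, β⟫ + c + σ₂ * q)) F)
    (b : ℝ → ℝ) (hb : Integrable b F)
    (hdom_start : ∀ x ∈ U, ∀ q,
      ‖fderiv ℝ (fun y : EuclideanSpace ℝ (Fin k) =>
        M q * G (⟪y, γ⟫ + σ₁ * q) * H (⟪y, β⟫ + c + σ₂ * q)) x‖ ≤ b q)
    (hdom_stay : ∀ x ∈ U, ∀ q,
      ‖fderiv ℝ (fun y : EuclideanSpace ℝ (Fin k) =>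
        M q * G (⟪x₀, γ⟫ + σ₁ * q) * H (⟪y, β⟫ + c + σ₂ * q)) x‖ ≤ b q)
    (ω : Fin k) :
    fderiv ℝ Pstart x₀ (EuclideanSpace.single ω 1) -
        fderiv ℝ Pstay x₀ (EuclideanSpace.single ω 1) =
      γ ω * ∫ q, M q * g (⟪x₀, γ⟫ + σ₁ * q) * H (⟪x₀, β⟫ + c + σ₂ * q) ∂F := by
  have hGm : Measurable G := (continuous_iff_continuousAt.2 fun t ↦ (hG t).continuousAt).measurable
  have hHm : Measurable H := (continuous_iff_continuousAt.2 fun t ↦ (hH t).continuousAt).measurable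
  have hgm : Measurable g := funext (fun t ↦ (hG t).deriv) ▸ measurable_deriv G
  have hhm : Measurable h := funext (fun t ↦ (hH t).deriv) ▸ measurable_deriv H
  obtain ⟨hDstart_int, hPstart_deriv⟩ := integrable_and_hasFDerivAt_integral_of_fderiv_le hU
    hint_start (by fun_prop)
    (fun x _ q ↦ hasFDerivAt_attention_choice_integrand hG hH γ β c σ₁ σ₂ (M q) q x)
    hdom_start hb
  obtain ⟨hDstay_int, hPstay_deriv⟩ := integrable_and_hasFDerivAt_integral_of_fderiv_le hU
    hint_stay (by fun_prop)
    (fun x _ q ↦ hasFDerivAt_choice_integrand hH β c σ₂ (M q * G (⟪x₀, γ⟫ + σ₁ * q)) q x)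
    hdom_stay hb
  rw [funext hPstart, funext hPstay, hPstart_deriv.fderiv, hPstay_deriv.fderiv,
    integral_apply hDstart_int, integral_apply hDstay_int,
    ← integral_sub (hDstart_int.apply_continuousLinearMap _)
      (hDstay_int.apply_continuousLinearMap _),
    ← integral_const_mul]
  congr 1 with q
  simp only [add_apply, smul_apply, smul_eq_mul, EuclideanSpace.innerSL_apply_single_one]
  ring

/-- Key difference identity preceding Theorem 3: with
`P_start(x) = ∫ M(q)·G(⟪x,γ⟫+σ₁q)·H(⟪x,β⟫+c+σ₂q) dF(q)` and
`P_stay(x) = ∫ M(q)·G(⟪x₀,γ⟫+σ₁q)·H(⟪x,β⟫+c+σ₂q) dF(q)`, differencing the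
partial derivatives at `x₀` removes the choice component:
`∂P_start/∂x_ω(x₀) − ∂P_stay/∂x_ω(x₀) = γ_ω ∫ M(q)·g(⟪x₀,γ⟫+σ₁q)·H(⟪x₀,β⟫+c+σ₂q) dF(q)`. -/
theorem difference_identity_attention_component
    (k : ℕ) (F : Measure ℝ) [IsProbabilityMeasure F]
    (M : ℝ → ℝ) (hM : Measurable M) (hMnn : ∀ q, 0 ≤ M q)
    (G H g h : ℝ → ℝ)
    (hG : ∀ x, HasDerivAt G (g x) x) (hH : ∀ x, HasDerivAt H (h x) x)
    (hGpos : ∀ x, 0 < G x)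
    (γ β : EuclideanSpace ℝ (Fin k)) (c σ₁ σ₂ : ℝ)
    (x₀ : EuclideanSpace ℝ (Fin k))
    (Pstart Pstay : EuclideanSpace ℝ (Fin k) → ℝ)
    (hPstart : ∀ x, Pstart x =
      ∫ q, M q * G (⟪x, γ⟫ + σ₁ * q) * H (⟪x, β⟫ + c + σ₂ * q) ∂F)
    (hPstay : ∀ x, Pstay x =
      ∫ q, M q * G (⟪x₀, γ⟫ + σ₁ * q) * H (⟪x, β⟫ + c + σ₂ * q) ∂F)
    (U : Set (EuclideanSpace ℝ (Fin k))) (hU : U ∈ nhds x₀)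
    (hint_start : ∀ x ∈ U,
      Integrable (fun q => M q * G (⟪x, γ⟫ + σ₁ * q) * H (⟪x, β⟫ + c + σ₂ * q)) F)
    (hint_stay : ∀ x ∈ U,
      Integrable (fun q => M q * G (⟪x₀, γ⟫ + σ₁ * q) * H (⟪x, β⟫ + c + σ₂ * q)) F)
    (b : ℝ → ℝ) (hb : Integrable b F)
    (hdom_start : ∀ x ∈ U, ∀ q,
      ‖fderiv ℝ (fun y : EuclideanSpace ℝ (Fin k) =>
        M q * G (⟪y, γ⟫ + σ₁ * q) * H (⟪y, β⟫ + c + σ₂ * q)) x‖ ≤ b q)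
    (hdom_stay : ∀ x ∈ U, ∀ q,
      ‖fderiv ℝ (fun y : EuclideanSpace ℝ (Fin k) =>
        M q * G (⟪x₀, γ⟫ + σ₁ * q) * H (⟪y, β⟫ + c + σ₂ * q)) x‖ ≤ b q)
    (ω : Fin k) :
    fderiv ℝ Pstart x₀ (EuclideanSpace.single ω 1) -
        fderiv ℝ Pstay x₀ (EuclideanSpace.single ω 1) =
      γ ω * ∫ q, M q * g (⟪x₀, γ⟫ + σ₁ * q) * H (⟪x₀, β⟫ + c + σ₂ * q) ∂F :=
  difference_identity_attention_component_general k F M hM G H g h hG hH γ β c σ₁ σ₂ x₀ Pstart Pstay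
    hPstart hPstay U hU hint_start hint_stay b hb hdom_start hdom_stay ω
end

section
/- With F, M, G, H, g, h, γ, β, c, σ₁, σ₂, x₀, P_start, and P_stay as in the preceding difference identity, assume additionally that K := ∫ M(q)·g(⟪x₀, γ⟫ + σ₁ q)·H(⟪x₀, β⟫ + c + σ₂ q) dF(q) > 0 and that γ_B = 1 for a designated coordinate B. Then ∂P_start/∂x_B(x₀) − ∂P_stay/∂x_B(x₀) = K > 0, and for every coordinate ω, γ_ω = [∂P_start/∂x_ω(x₀) − ∂P_stay/∂x_ω(x₀)] / [∂P_start/∂x_B(x₀) − ∂P_stay/∂x_B(x₀)]. -/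
open MeasureTheory
open scoped RealInnerProductSpace
open Filter Topology

/-!
Differentiate under the integral sign. The stay integrand is the start integrand with the
attention index frozen at `⟪x₀, γ⟫`, so at `x₀` the two integrands and their derivatives through
the choice index `⟪x, β⟫` coincide. Hence `∇P_start(x₀) − ∇P_stay(x₀)` is the attention term
alone, `K • γ` with `K = ∫ M g H dF`; its `ω`-th coordinate is `K γ_ω`, and `γ_B = 1` identifies
`K` and then every `γ_ω`.
-/

theorem hasFDerivAt_integral_of_norm_fderiv_le {α 𝕜 E H : Type*} [MeasurableSpace α]
    {μ : Measure α} [RCLike 𝕜] [NormedAddCommGroup E] [NormedSpace ℝ E] [NormedSpace 𝕜 E]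
    [NormedAddCommGroup H] [NormedSpace 𝕜 H] {F : H → α → E} {F' : H → α → H →L[𝕜] E}
    {x₀ : H} {s : Set H} {bound : α → ℝ} (hs : s ∈ 𝓝 x₀)
    (hF_int : ∀ x ∈ s, Integrable (F x) μ) (hF'_meas : AEStronglyMeasurable (F' x₀) μ)
    (h_diff : ∀ x ∈ s, ∀ a, HasFDerivAt (F · a) (F' x a) x)
    (h_bound : ∀ x ∈ s, ∀ a, ‖fderiv 𝕜 (F · a) x‖ ≤ bound a)
    (bound_integrable : Integrable bound μ) :
    Integrable (F' x₀) μ ∧ HasFDerivAt (fun x ↦ ∫ a, F x a ∂μ) (∫ a, F' x₀ a ∂μ) x₀ := by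
  have h_bound' : ∀ x ∈ s, ∀ a, ‖F' x a‖ ≤ bound a := fun x hx a ↦
    (h_diff x hx a).fderiv ▸ h_bound x hx a
  have hx₀ : x₀ ∈ s := mem_of_mem_nhds hs
  refine ⟨bound_integrable.mono' hF'_meas (.of_forall (h_bound' x₀ hx₀)), ?_⟩
  exact hasFDerivAt_integral_of_dominated_of_fderiv_le hs
    (eventually_of_mem hs fun x hx ↦ (hF_int x hx).aestronglyMeasurable) (hF_int x₀ hx₀)
    hF'_meas (.of_forall fun a x hx ↦ h_bound' x hx a) bound_integrable
    (.of_forall fun a x hx ↦ h_diff x hx a)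

theorem measurable_of_forall_hasDerivAt {𝕜 F : Type*} [NontriviallyNormedField 𝕜]
    [LocallyCompactSpace 𝕜] [MeasurableSpace 𝕜] [OpensMeasurableSpace 𝕜] [NormedAddCommGroup F]
    [NormedSpace 𝕜 F] [CompleteSpace F] [MeasurableSpace F] [BorelSpace F] {f f' : 𝕜 → F}
    (hf : ∀ x, HasDerivAt f (f' x) x) : Measurable f' :=
  funext (fun x ↦ (hf x).deriv) ▸ measurable_deriv f

section InnerProductSpace

variable {E : Type*} [NormedAddCommGroup E] [InnerProductSpace ℝ E]

theorem hasFDerivAt_comp_inner_add {G : ℝ → ℝ} {d t : ℝ} {γ x : E}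
    (hG : HasDerivAt G d (⟪x, γ⟫ + t)) :
    HasFDerivAt (fun y ↦ G (⟪y, γ⟫ + t)) (d • innerSL ℝ γ) x := by
  have hlin : HasFDerivAt (fun y : E ↦ ⟪y, γ⟫ + t) (innerSL ℝ γ) x := by
    simpa only [innerSL_apply_apply, real_inner_comm] using (innerSL ℝ γ).hasFDerivAt.add_const t
  exact hG.comp_hasFDerivAt x hlin

theorem fderiv_integral_start_sub_fderiv_integral_stay {F : Measure ℝ} {M G H g h : ℝ → ℝ}
    (hM : Measurable M) (hG : ∀ x, HasDerivAt G (g x) x) (hH : ∀ x, HasDerivAt H (h x) x)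
    {γ β x₀ : E} {c σ₁ σ₂ : ℝ} {U : Set E} (hU : U ∈ 𝓝 x₀)
    (hint_start : ∀ x ∈ U,
      Integrable (fun q ↦ M q * G (⟪x, γ⟫ + σ₁ * q) * H (⟪x, β⟫ + c + σ₂ * q)) F)
    (hint_stay : ∀ x ∈ U,
      Integrable (fun q ↦ M q * G (⟪x₀, γ⟫ + σ₁ * q) * H (⟪x, β⟫ + c + σ₂ * q)) F)
    {b : ℝ → ℝ} (hb : Integrable b F)
    (hdom_start : ∀ x ∈ U, ∀ q,
      ‖fderiv ℝ (fun y ↦ M q * G (⟪y, γ⟫ + σ₁ * q) * H (⟪y, β⟫ + c + σ₂ * q)) x‖ ≤ b q)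
    (hdom_stay : ∀ x ∈ U, ∀ q,
      ‖fderiv ℝ (fun y ↦ M q * G (⟪x₀, γ⟫ + σ₁ * q) * H (⟪y, β⟫ + c + σ₂ * q)) x‖ ≤ b q) :
    fderiv ℝ (fun x ↦ ∫ q, M q * G (⟪x, γ⟫ + σ₁ * q) * H (⟪x, β⟫ + c + σ₂ * q) ∂F) x₀ -
        fderiv ℝ (fun x ↦ ∫ q, M q * G (⟪x₀, γ⟫ + σ₁ * q) * H (⟪x, β⟫ + c + σ₂ * q) ∂F) x₀ =
      (∫ q, M q * g (⟪x₀, γ⟫ + σ₁ * q) * H (⟪x₀, β⟫ + c + σ₂ * q) ∂F) • innerSL ℝ γ := by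
  have hg : Measurable g := measurable_of_forall_hasDerivAt hG
  have hh : Measurable h := measurable_of_forall_hasDerivAt hH
  have hGm : Measurable G := Continuous.measurable <| continuous_iff_continuousAt.2 fun x ↦
    (hG x).continuousAt
  have hHm : Measurable H := Continuous.measurable <| continuous_iff_continuousAt.2 fun x ↦
    (hH x).continuousAt
  have hH_inner : ∀ x q, HasFDerivAt (fun y ↦ H (⟪y, β⟫ + c + σ₂ * q))
      (h (⟪x, β⟫ + c + σ₂ * q) • innerSL ℝ β) x := fun x q ↦ by
    simpa only [add_assoc] using hasFDerivAt_comp_inner_add (t := c + σ₂ * q) (hH _)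
  set Dstart : E → ℝ → E →L[ℝ] ℝ := fun x q ↦
    (M q * G (⟪x, γ⟫ + σ₁ * q)) • (h (⟪x, β⟫ + c + σ₂ * q) • innerSL ℝ β) +
      H (⟪x, β⟫ + c + σ₂ * q) • (M q • (g (⟪x, γ⟫ + σ₁ * q) • innerSL ℝ γ))
  set Dstay : E → ℝ → E →L[ℝ] ℝ := fun x q ↦
    (M q * G (⟪x₀, γ⟫ + σ₁ * q)) • (h (⟪x, β⟫ + c + σ₂ * q) • innerSL ℝ β)
  have hDstart : ∀ x q, HasFDerivAt
      (fun y ↦ M q * G (⟪y, γ⟫ + σ₁ * q) * H (⟪y, β⟫ + c + σ₂ * q)) (Dstart x q) x :=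
    fun x q ↦ ((hasFDerivAt_comp_inner_add (hG _)).const_mul (M q)).mul (hH_inner x q)
  have hDstay : ∀ x q, HasFDerivAt
      (fun y ↦ M q * G (⟪x₀, γ⟫ + σ₁ * q) * H (⟪y, β⟫ + c + σ₂ * q)) (Dstay x q) x :=
    fun x q ↦ (hH_inner x q).const_mul _
  have hmeas_affine : ∀ {φ : ℝ → ℝ}, Measurable φ → ∀ a s : ℝ,
      StronglyMeasurable fun q ↦ φ (a + s * q) :=
    fun hφ _ _ ↦ (hφ.comp (by fun_prop)).stronglyMeasurable
  have hDstart_meas : AEStronglyMeasurable (Dstart x₀) F :=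
    (((hM.stronglyMeasurable.mul (hmeas_affine hGm _ _)).smul
      ((hmeas_affine hh _ _).smul_const _)).add ((hmeas_affine hHm _ _).smul
        (hM.stronglyMeasurable.smul ((hmeas_affine hg _ _).smul_const _)))).aestronglyMeasurable
  have hDstay_meas : AEStronglyMeasurable (Dstay x₀) F :=
    ((hM.stronglyMeasurable.mul (hmeas_affine hGm _ _)).smul
      ((hmeas_affine hh _ _).smul_const _)).aestronglyMeasurable
  obtain ⟨hDstart_int, hstart⟩ := hasFDerivAt_integral_of_norm_fderiv_le hU hint_start
    hDstart_meas (fun x _ q ↦ hDstart x q) hdom_start hb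
  obtain ⟨hDstay_int, hstay⟩ := hasFDerivAt_integral_of_norm_fderiv_le hU hint_stay
    hDstay_meas (fun x _ q ↦ hDstay x q) hdom_stay hb
  rw [hstart.fderiv, hstay.fderiv, ← integral_sub hDstart_int hDstay_int]
  refine (integral_congr_ae (.of_forall fun q ↦ ?_)).trans (integral_smul_const _ _)
  ext v
  simp only [Dstart, Dstay, add_sub_cancel_left, smul_apply,
    coe_innerSL_apply, smul_eq_mul]
  ring

end InnerProductSpace

theorem identification_of_attention_parameters_full_model_general
    (k : ℕ) (F : Measure ℝ) [IsProbabilityMeasure F]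
    (M : ℝ → ℝ) (hM : Measurable M)
    (G H g h : ℝ → ℝ)
    (hG : ∀ x, HasDerivAt G (g x) x) (hH : ∀ x, HasDerivAt H (h x) x)
    (γ β : EuclideanSpace ℝ (Fin k)) (c σ₁ σ₂ : ℝ)
    (x₀ : EuclideanSpace ℝ (Fin k))
    (Pstart Pstay : EuclideanSpace ℝ (Fin k) → ℝ)
    (hPstart : ∀ x, Pstart x =
      ∫ q, M q * G (⟪x, γ⟫ + σ₁ * q) * H (⟪x, β⟫ + c + σ₂ * q) ∂F)
    (hPstay : ∀ x, Pstay x =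
      ∫ q, M q * G (⟪x₀, γ⟫ + σ₁ * q) * H (⟪x, β⟫ + c + σ₂ * q) ∂F)
    (U : Set (EuclideanSpace ℝ (Fin k))) (hU : U ∈ nhds x₀)
    (hint_start : ∀ x ∈ U,
      Integrable (fun q => M q * G (⟪x, γ⟫ + σ₁ * q) * H (⟪x, β⟫ + c + σ₂ * q)) F)
    (hint_stay : ∀ x ∈ U,
      Integrable (fun q => M q * G (⟪x₀, γ⟫ + σ₁ * q) * H (⟪x, β⟫ + c + σ₂ * q)) F)
    (b : ℝ → ℝ) (hb : Integrable b F)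
    (hdom_start : ∀ x ∈ U, ∀ q,
      ‖fderiv ℝ (fun y : EuclideanSpace ℝ (Fin k) =>
        M q * G (⟪y, γ⟫ + σ₁ * q) * H (⟪y, β⟫ + c + σ₂ * q)) x‖ ≤ b q)
    (hdom_stay : ∀ x ∈ U, ∀ q,
      ‖fderiv ℝ (fun y : EuclideanSpace ℝ (Fin k) =>
        M q * G (⟪x₀, γ⟫ + σ₁ * q) * H (⟪y, β⟫ + c + σ₂ * q)) x‖ ≤ b q)
    (hK : 0 < ∫ q, M q * g (⟪x₀, γ⟫ + σ₁ * q) * H (⟪x₀, β⟫ + c + σ₂ * q) ∂F)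
    (B : Fin k) (hB : γ B = 1) :
    (fderiv ℝ Pstart x₀ (EuclideanSpace.single B 1) -
        fderiv ℝ Pstay x₀ (EuclideanSpace.single B 1) =
      ∫ q, M q * g (⟪x₀, γ⟫ + σ₁ * q) * H (⟪x₀, β⟫ + c + σ₂ * q) ∂F) ∧
      (0 < fderiv ℝ Pstart x₀ (EuclideanSpace.single B 1) -
        fderiv ℝ Pstay x₀ (EuclideanSpace.single B 1)) ∧
      ∀ ω : Fin k,
        γ ω =
          (fderiv ℝ Pstart x₀ (EuclideanSpace.single ω 1) -
              fderiv ℝ Pstay x₀ (EuclideanSpace.single ω 1)) /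
            (fderiv ℝ Pstart x₀ (EuclideanSpace.single B 1) -
              fderiv ℝ Pstay x₀ (EuclideanSpace.single B 1)) := by
  set K := ∫ q, M q * g (⟪x₀, γ⟫ + σ₁ * q) * H (⟪x₀, β⟫ + c + σ₂ * q) ∂F
  have hdiff : fderiv ℝ Pstart x₀ - fderiv ℝ Pstay x₀ = K • innerSL ℝ γ := by
    rw [funext hPstart, funext hPstay]
    exact fderiv_integral_start_sub_fderiv_integral_stay hM hG hH hU hint_start hint_stay hb
      hdom_start hdom_stay
  have hcoord : ∀ ω, fderiv ℝ Pstart x₀ (EuclideanSpace.single ω 1) -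
      fderiv ℝ Pstay x₀ (EuclideanSpace.single ω 1) = K * γ ω := fun ω ↦ by
    simpa [EuclideanSpace.inner_single_right] using
      DFunLike.congr_fun hdiff (EuclideanSpace.single ω 1)
  have hcoordB := hcoord B
  rw [hB, mul_one] at hcoordB
  refine ⟨hcoordB, hcoordB ▸ hK, fun ω ↦ ?_⟩
  rw [hcoord, hcoordB, mul_div_cancel_left₀ _ hK.ne']

/-- Theorem 3 (constructive identification of the attention parameters): on top
of the difference identity hypotheses, if
`K = ∫ M(q)·g(⟪x₀,γ⟫+σ₁q)·H(⟪x₀,β⟫+c+σ₂q) dF(q) > 0` and `γ_B = 1`, then the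
differenced derivative in the benefit coordinate equals `K > 0` and every
attention parameter is identified as
`γ_ω = [∂P_start/∂x_ω − ∂P_stay/∂x_ω] / [∂P_start/∂x_B − ∂P_stay/∂x_B]` at `x₀`. -/
theorem identification_of_attention_parameters_full_model
    (k : ℕ) (F : Measure ℝ) [IsProbabilityMeasure F]
    (M : ℝ → ℝ) (hM : Measurable M) (hMnn : ∀ q, 0 ≤ M q)
    (G H g h : ℝ → ℝ)
    (hG : ∀ x, HasDerivAt G (g x) x) (hH : ∀ x, HasDerivAt H (h x) x)
    (hGpos : ∀ x, 0 < G x)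
    (γ β : EuclideanSpace ℝ (Fin k)) (c σ₁ σ₂ : ℝ)
    (x₀ : EuclideanSpace ℝ (Fin k))
    (Pstart Pstay : EuclideanSpace ℝ (Fin k) → ℝ)
    (hPstart : ∀ x, Pstart x =
      ∫ q, M q * G (⟪x, γ⟫ + σ₁ * q) * H (⟪x, β⟫ + c + σ₂ * q) ∂F)
    (hPstay : ∀ x, Pstay x =
      ∫ q, M q * G (⟪x₀, γ⟫ + σ₁ * q) * H (⟪x, β⟫ + c + σ₂ * q) ∂F)
    (U : Set (EuclideanSpace ℝ (Fin k))) (hU : U ∈ nhds x₀)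
    (hint_start : ∀ x ∈ U,
      Integrable (fun q => M q * G (⟪x, γ⟫ + σ₁ * q) * H (⟪x, β⟫ + c + σ₂ * q)) F)
    (hint_stay : ∀ x ∈ U,
      Integrable (fun q => M q * G (⟪x₀, γ⟫ + σ₁ * q) * H (⟪x, β⟫ + c + σ₂ * q)) F)
    (b : ℝ → ℝ) (hb : Integrable b F)
    (hdom_start : ∀ x ∈ U, ∀ q,
      ‖fderiv ℝ (fun y : EuclideanSpace ℝ (Fin k) =>
        M q * G (⟪y, γ⟫ + σ₁ * q) * H (⟪y, β⟫ + c + σ₂ * q)) x‖ ≤ b q)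
    (hdom_stay : ∀ x ∈ U, ∀ q,
      ‖fderiv ℝ (fun y : EuclideanSpace ℝ (Fin k) =>
        M q * G (⟪x₀, γ⟫ + σ₁ * q) * H (⟪y, β⟫ + c + σ₂ * q)) x‖ ≤ b q)
    (hK : 0 < ∫ q, M q * g (⟪x₀, γ⟫ + σ₁ * q) * H (⟪x₀, β⟫ + c + σ₂ * q) ∂F)
    (B : Fin k) (hB : γ B = 1) :
    (fderiv ℝ Pstart x₀ (EuclideanSpace.single B 1) -
        fderiv ℝ Pstay x₀ (EuclideanSpace.single B 1) =
      ∫ q, M q * g (⟪x₀, γ⟫ + σ₁ * q) * H (⟪x₀, β⟫ + c + σ₂ * q) ∂F) ∧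
      (0 < fderiv ℝ Pstart x₀ (EuclideanSpace.single B 1) -
        fderiv ℝ Pstay x₀ (EuclideanSpace.single B 1)) ∧
      ∀ ω : Fin k,
        γ ω =
          (fderiv ℝ Pstart x₀ (EuclideanSpace.single ω 1) -
              fderiv ℝ Pstay x₀ (EuclideanSpace.single ω 1)) /
            (fderiv ℝ Pstart x₀ (EuclideanSpace.single B 1) -
              fderiv ℝ Pstay x₀ (EuclideanSpace.single B 1)) :=
  identification_of_attention_parameters_full_model_general k F M hM G H g h hG hH γ β c σ₁ σ₂ x₀
    Pstart Pstay hPstart hPstay U hU hint_start hint_stay b hb hdom_start hdom_stay hK B hB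
end

section
/- Fix a period length T = 4, a real q, an attention index a ∈ ℝ, a base choice utility u ∈ ℝ, a hassle index κ ∈ ℝ, and reals σ₁, σ₂. Let G, H : ℝ → ℝ be any functions, and define the single-period transition probabilities π(1 | d, z) = G(a + σ₁ q)^{1−d} · H(u + s(d, z)·κ + σ₂ q) and π(0 | d, z) = 1 − π(1 | d, z), where s(d, z) = max(1 − d, d·z). Consider the path d̊ = (1, 1, 0, 0) with recertification indicators z̊ = (0, 1, 0, 0), and the path d̈ = (0, 1, 1, 0) with z̈ = (0, 0, 1, 0), both with initial state d₀ = 0. Then (i) ∏_{t=1}^4 π(d̊_t | d̊_{t−1}, z̊_t) = ∏_{t=1}^4 π(d̈_t | d̈_{t−1}, z̈_t), and (ii) the period-2 choice utility along d̊ equals the period-3 choice utility along d̈, both being u + κ + σ₂ q. -/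
/-!
Both paths make the same four transitions `0 → 1` (`z = 0`), `1 → 1` (`z = 1`), `1 → 0` (`z = 0`)
and `0 → 0` (`z = 0`), only in cyclically rotated order, so their likelihoods agree for every
transition kernel `π`. The utilities in (ii) are those of the recertification step `1 → 1` with
`z = 1`, whose hassle indicator is `s(1, 1) = 1`.
-/

theorem prod_transitions_eq_of_perm {M α β : Type*} [CommMonoid M] {n : ℕ}
    (π : α → α → β → M) (d d' : Fin (n + 1) → α) (z z' : Fin n → β) (σ : Equiv.Perm (Fin n))
    (h : ∀ t, d' t.succ = d (σ t).succ ∧ d' t.castSucc = d (σ t).castSucc ∧ z' t = z (σ t)) :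
    ∏ t, π (d' t.succ) (d' t.castSucc) (z' t) = ∏ t, π (d t.succ) (d t.castSucc) (z t) :=
  Fintype.prod_equiv σ _ _ fun t => by rw [(h t).1, (h t).2.1, (h t).2.2]

theorem existence_of_H1_H2_sequences_general
    (q u κ σ₂ : ℝ)
    (s : ℕ → ℕ → ℕ) (hs : ∀ d z, s d z = max (1 - d) (d * z))
    (π : ℕ → ℕ → ℕ → ℝ)
    (dring : Fin 5 → ℕ) (hdring : dring = ![0, 1, 1, 0, 0])
    (zring : Fin 4 → ℕ) (hzring : zring = ![0, 1, 0, 0])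
    (dddot : Fin 5 → ℕ) (hdddot : dddot = ![0, 0, 1, 1, 0])
    (zddot : Fin 4 → ℕ) (hzddot : zddot = ![0, 0, 1, 0]) :
    (∏ t : Fin 4, π (dring t.succ) (dring t.castSucc) (zring t) =
        ∏ t : Fin 4, π (dddot t.succ) (dddot t.castSucc) (zddot t)) ∧
      (u + (s (dring 1) (zring 1) : ℝ) * κ + σ₂ * q =
        u + (s (dddot 2) (zddot 2) : ℝ) * κ + σ₂ * q) ∧
      (u + (s (dring 1) (zring 1) : ℝ) * κ + σ₂ * q = u + κ + σ₂ * q) := by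
  subst hdring hzring hdddot hzddot
  have hrecert : s 1 1 = 1 := by simp [hs]
  refine ⟨(prod_transitions_eq_of_perm π _ _ _ _ (finRotate 4).symm ?_).symm, rfl, ?_⟩
  · decide
  · simp [hrecert]

/-- Existence of sequences satisfying the high-level assumptions H1 and H2 of
Theorem 3 with `T = 4` and time-invariant covariates: for the paths
`d̊ = (1,1,0,0)` with recertification `z̊ = (0,1,0,0)` and `d̈ = (0,1,1,0)` with
`z̈ = (0,0,1,0)`, both started at `d₀ = 0`, (i) the products of single-period
transition probabilities coincide (H1), and (ii) the period-2 choice utility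
along `d̊` equals the period-3 choice utility along `d̈`, both being
`u + κ + σ₂·q` (H2). Here `π(1 | d, z) = G(a+σ₁q)^{1-d} · H(u + s(d,z)·κ + σ₂q)`,
`π(0 | d, z) = 1 − π(1 | d, z)`, and `s(d,z) = max(1−d, d·z)`. -/
theorem existence_of_H1_H2_sequences
    (q a u κ σ₁ σ₂ : ℝ) (G H : ℝ → ℝ)
    (s : ℕ → ℕ → ℕ) (hs : ∀ d z, s d z = max (1 - d) (d * z))
    (π : ℕ → ℕ → ℕ → ℝ)
    (hπ1 : ∀ d z, π 1 d z =
      G (a + σ₁ * q) ^ (1 - d) * H (u + (s d z : ℝ) * κ + σ₂ * q))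
    (hπ0 : ∀ d z, π 0 d z = 1 - π 1 d z)
    (dring : Fin 5 → ℕ) (hdring : dring = ![0, 1, 1, 0, 0])
    (zring : Fin 4 → ℕ) (hzring : zring = ![0, 1, 0, 0])
    (dddot : Fin 5 → ℕ) (hdddot : dddot = ![0, 0, 1, 1, 0])
    (zddot : Fin 4 → ℕ) (hzddot : zddot = ![0, 0, 1, 0]) :
    (∏ t : Fin 4, π (dring t.succ) (dring t.castSucc) (zring t) =
        ∏ t : Fin 4, π (dddot t.succ) (dddot t.castSucc) (zddot t)) ∧
      (u + (s (dring 1) (zring 1) : ℝ) * κ + σ₂ * q =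
        u + (s (dddot 2) (zddot 2) : ℝ) * κ + σ₂ * q) ∧
      (u + (s (dring 1) (zring 1) : ℝ) * κ + σ₂ * q = u + κ + σ₂ * q) :=
  existence_of_H1_H2_sequences_general q u κ σ₂ s hs π dring hdring zring hzring dddot hdddot zddot
    hzddot
end

section
/- Fix T ≥ 1. Let F be a probability measure on ℝ and let ν₁, …, ν_T, μ₁, …, μ_T be probability measures on ℝ with distribution-type functions G_t(a) := ν_t{e : e < a} and H_t(c) := μ_t{v : v < c}. Work on the product probability space Ω = ℝ × ∏_{t=1}^T (ℝ × ℝ) with measure F ⊗ ⨂_{t=1}^T (ν_t ⊗ μ_t), writing a sample point as (q, (e₁, v₁), …, (e_T, v_T)). Fix reals σ₁, σ₂, attention indices a_t, and choice utilities c_t(d) for d ∈ {0,1}, and define the shocks ε_t = e_t − σ₁ q and ξ_t = v_t − σ₂ q, and the process D₀ = 0, D_t = 1 if (D_{t−1} = 1 or a_t > ε_t) and c_t(D_{t−1}) > ξ_t, else D_t = 0. Then for every path (d₁, …, d_T) ∈ {0,1}^T, the probability that D_t = d_t for all t equals ∫ ∏_{t=1}^T [G_t(a_t + σ₁ q)^{1−d_{t−1}}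 · H_t(c_t(d_{t−1}) + σ₂ q)]^{d_t} · [1 − G_t(a_t + σ₁ q)^{1−d_{t−1}} · H_t(c_t(d_{t−1}) + σ₂ q)]^{1−d_t} dF(q). -/
/-!
Once the earlier statuses follow the path `d`, the event `D_t = d_t` depends on the period-`t`
shocks only, so the path event is a cylinder `{∀ t, (e_t, v_t) ∈ A_t(q)}` whose sections are
fixed by the random effect `q`. Fubini over `F ⊗ ⨂_t (ν_t ⊗ μ_t)` then gives the integral over `q` of
`∏_t (ν_t ⊗ μ_t)(A_t(q))`. Each `A_t(q)` is the rectangle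
`{e < a_t + σ₁q} × {v < c_t(d_{t-1}) + σ₂q}` (first factor replaced by `ℝ` when `d_{t-1} = 1`)
or its complement.
-/

open MeasureTheory Set

section ConditionalIndependence

variable {α ι : Type*} [Fintype ι] {β : ι → Type*} [MeasurableSpace α]
  [∀ i, MeasurableSpace (β i)] (F : Measure α) (ν : ∀ i, Measure (β i))
  {A : ∀ i, α → Set (β i)}

lemma measurableSet_setOf_forall_mem (hA : ∀ i, MeasurableSet {x : α × β i | x.2 ∈ A i x.1}) :
    MeasurableSet {ω : α × (∀ i, β i) | ∀ i, ω.2 i ∈ A i ω.1} :=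
  (Measurable.forall fun i =>
    (hA i).mem.comp (measurable_fst.prodMk ((measurable_pi_apply i).comp measurable_snd))).setOf

theorem prod_pi_setOf_forall_mem [∀ i, SigmaFinite (ν i)]
    (hA : ∀ i, MeasurableSet {x : α × β i | x.2 ∈ A i x.1}) :
    F.prod (Measure.pi ν) {ω | ∀ i, ω.2 i ∈ A i ω.1} = ∫⁻ q, ∏ i, ν i (A i q) ∂F := by
  rw [Measure.prod_apply (measurableSet_setOf_forall_mem hA)]
  refine lintegral_congr fun q => ?_
  rw [← Measure.pi_pi]
  congr 1
  ext
  simp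

theorem measureReal_prod_pi_setOf_forall_mem [∀ i, IsFiniteMeasure (ν i)]
    (hA : ∀ i, MeasurableSet {x : α × β i | x.2 ∈ A i x.1}) :
    (F.prod (Measure.pi ν)).real {ω | ∀ i, ω.2 i ∈ A i ω.1} =
      ∫ q, ∏ i, (ν i).real (A i q) ∂F := by
  have hmeas : Measurable fun q => ∏ i, ν i (A i q) :=
    Finset.measurable_prod _ fun i _ => measurable_measure_prodMk_left (hA i)
  rw [measureReal_def, prod_pi_setOf_forall_mem F ν hA, ← integral_toReal hmeas.aemeasurable
    (ae_of_all _ fun q => ENNReal.prod_lt_top fun i _ => measure_lt_top _ _)]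
  simp only [ENNReal.toReal_prod, measureReal_def]

end ConditionalIndependence

theorem forall_succ_eq_iff_step {T : ℕ} {D d : ℕ → ℕ} {step : Fin T → ℕ → Prop}
    [∀ t k, Decidable (step t k)] (h0 : D 0 = d 0)
    (hD : ∀ t : Fin T, D (t + 1) = if step t (D t) then 1 else 0)
    (hd : ∀ t : Fin T, d (t + 1) = 0 ∨ d (t + 1) = 1) :
    (∀ t : Fin T, D (t + 1) = d (t + 1)) ↔ ∀ t : Fin T, (step t (d t) ↔ d (t + 1) = 1) := by
  constructor
  · intro h t
    have hprev : D t = d t := by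
      obtain ⟨_ | s, hs⟩ := t
      · exact h0
      · exact h ⟨s, by omega⟩
    rw [← h, hD, hprev]
    split_ifs <;> simp_all
  · intro h
    suffices ∀ n ≤ T, D n = d n from fun t => this _ t.isLt
    intro n
    induction n with
    | zero => exact fun _ => h0
    | succ k ih =>
      intro hk
      have hstep := h ⟨k, hk⟩
      rw [hD ⟨k, hk⟩, ih (by omega)]
      rcases hd ⟨k, hk⟩ with hk' | hk' <;> simp_all

/-- Shocks `(e, v)` moving status `d` to status `d'`; in the model `x = a_t + σ₁ q` and
`y = c_t(d) + σ₂ q`. -/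
def transitionSet (d d' : ℕ) (x y : ℝ) : Set (ℝ × ℝ) :=
  {p | ((d = 1 ∨ p.1 < x) ∧ p.2 < y) ↔ d' = 1}

lemma transitionSet_one (d : ℕ) (x y : ℝ) :
    transitionSet d 1 x y = (if d = 1 then univ else Iio x) ×ˢ Iio y := by
  ext p
  by_cases h : d = 1 <;> simp [transitionSet, h]

lemma transitionSet_zero (d : ℕ) (x y : ℝ) :
    transitionSet d 0 x y = (transitionSet d 1 x y)ᶜ := by
  ext p
  simp [transitionSet]

lemma measurableSet_setOf_mem_transitionSet {α : Type*} [MeasurableSpace α] (d d' : ℕ)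
    {f g : α → ℝ} (hf : Measurable f) (hg : Measurable g) :
    MeasurableSet {x : α × (ℝ × ℝ) | x.2 ∈ transitionSet d d' (f x.1) (g x.1)} := by
  have h1 : MeasurableSet {x : α × (ℝ × ℝ) | x.2.1 < f x.1} :=
    measurableSet_lt measurable_snd.fst (hf.comp measurable_fst)
  have h2 : MeasurableSet {x : α × (ℝ × ℝ) | x.2.2 < g x.1} :=
    measurableSet_lt measurable_snd.snd (hg.comp measurable_fst)
  exact Measurable.setOf (.iff (.and (.or measurable_const h1.mem) h2.mem) measurable_const)

section Transition

variable (ν μ : Measure ℝ) [IsProbabilityMeasure ν] [IsProbabilityMeasure μ]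

lemma measureReal_prod_transitionSet_one {d : ℕ} (hd : d = 0 ∨ d = 1) (x y : ℝ) :
    (ν.prod μ).real (transitionSet d 1 x y) = ν.real (Iio x) ^ (1 - d) * μ.real (Iio y) := by
  rw [transitionSet_one, measureReal_prod_prod]
  rcases hd with rfl | rfl <;> simp

lemma measureReal_prod_transitionSet {d d' : ℕ} (hd : d = 0 ∨ d = 1) (hd' : d' = 0 ∨ d' = 1)
    (x y : ℝ) :
    (ν.prod μ).real (transitionSet d d' x y) =
      (ν.real (Iio x) ^ (1 - d) * μ.real (Iio y)) ^ d' *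
        (1 - ν.real (Iio x) ^ (1 - d) * μ.real (Iio y)) ^ (1 - d') := by
  rcases hd' with rfl | rfl
  · have hmeas : MeasurableSet (transitionSet d 1 x y) := by
      rw [transitionSet_one]
      split_ifs <;> exact .prod (by simp) measurableSet_Iio
    rw [transitionSet_zero, probReal_compl_eq_one_sub hmeas,
      measureReal_prod_transitionSet_one ν μ hd]
    simp
  · simp [measureReal_prod_transitionSet_one ν μ hd]

end Transition

theorem mle_likelihood_decomposition_general
    (T : ℕ)
    (F : Measure ℝ)
    (ν μ : Fin T → Measure ℝ)
    [∀ t, IsProbabilityMeasure (ν t)] [∀ t, IsProbabilityMeasure (μ t)]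
    (σ₁ σ₂ : ℝ) (a : Fin T → ℝ) (c : Fin T → ℕ → ℝ)
    (ε ξ : Fin T → (ℝ × (Fin T → ℝ × ℝ)) → ℝ)
    (hε : ∀ (t : Fin T) ω, ε t ω = (ω.2 t).1 - σ₁ * ω.1)
    (hξ : ∀ (t : Fin T) ω, ξ t ω = (ω.2 t).2 - σ₂ * ω.1)
    (D : ℕ → (ℝ × (Fin T → ℝ × ℝ)) → ℕ)
    (hD0 : ∀ ω, D 0 ω = 0)
    (hDt : ∀ (t : Fin T) ω,
      D ((t : ℕ) + 1) ω =
        if (D (t : ℕ) ω = 1 ∨ a t > ε t ω) ∧ c t (D (t : ℕ) ω) > ξ t ω then 1 else 0)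
    (d : ℕ → ℕ) (hd0 : d 0 = 0)
    (hdbin : ∀ t : Fin T, d ((t : ℕ) + 1) = 0 ∨ d ((t : ℕ) + 1) = 1) :
    ((F.prod (Measure.pi fun t : Fin T => (ν t).prod (μ t)))
        {ω | ∀ t : Fin T, D ((t : ℕ) + 1) ω = d ((t : ℕ) + 1)}).toReal =
      ∫ q, ∏ t : Fin T,
        ((ν t {e | e < a t + σ₁ * q}).toReal ^ (1 - d (t : ℕ)) *
            (μ t {v | v < c t (d (t : ℕ)) + σ₂ * q}).toReal) ^ d ((t : ℕ) + 1) *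
          (1 - (ν t {e | e < a t + σ₁ * q}).toReal ^ (1 - d (t : ℕ)) *
            (μ t {v | v < c t (d (t : ℕ)) + σ₂ * q}).toReal) ^ (1 - d ((t : ℕ) + 1)) ∂F := by
  have hpath : {ω : ℝ × (Fin T → ℝ × ℝ) | ∀ t : Fin T, D (t + 1) ω = d (t + 1)} =
      {ω | ∀ t : Fin T,
        ω.2 t ∈ transitionSet (d t) (d (t + 1)) (a t + σ₁ * ω.1) (c t (d t) + σ₂ * ω.1)} := by
    ext ω
    simp only [mem_ofPred_eq, forall_succ_eq_iff_step (D := fun n => D n ω)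
      (step := fun t k => (k = 1 ∨ a t > ε t ω) ∧ c t k > ξ t ω) ((hD0 ω).trans hd0.symm)
      (hDt · ω) hdbin, transitionSet, hε, hξ, gt_iff_lt, sub_lt_iff_lt_add]
  have hd : ∀ t : Fin T, d t = 0 ∨ d t = 1 := by
    rintro ⟨_ | s, hs⟩
    · exact .inl hd0
    · exact hdbin ⟨s, by omega⟩
  rw [hpath, ← measureReal_def, measureReal_prod_pi_setOf_forall_mem F _
    (A := fun (t : Fin T) q => transitionSet (d t) (d (t + 1)) (a t + σ₁ * q) (c t (d t) + σ₂ * q))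
    fun t => measurableSet_setOf_mem_transitionSet _ _ (f := (a t + σ₁ * ·))
      (g := (c t (d t) + σ₂ * ·)) (by fun_prop) (by fun_prop)]
  exact integral_congr_ae <| ae_of_all _ fun q => Finset.prod_congr rfl fun t _ =>
    measureReal_prod_transitionSet _ _ (hd t) (hdbin t) _ _

/-- Likelihood decomposition underlying the MLE of the full two-stage
inattention model: on the product space `ℝ × ∏_{t} (ℝ × ℝ)` with measure
`F ⊗ ⨂_t (ν_t ⊗ μ_t)`, writing a sample point as `(q, (e_t, v_t)_t)`, the
shocks are `ε_t = e_t − σ₁q` and `ξ_t = v_t − σ₂q`, the take-up process is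
`D₀ = 0`, `D_t = 1` iff (`D_{t−1} = 1` or `a_t > ε_t`) and `c_t(D_{t−1}) > ξ_t`,
and the probability of any path `(d₁,…,d_T) ∈ {0,1}^T` equals
`∫ ∏_t [G_t(a_t+σ₁q)^{1−d_{t−1}} H_t(c_t(d_{t−1})+σ₂q)]^{d_t}
      [1 − G_t(a_t+σ₁q)^{1−d_{t−1}} H_t(c_t(d_{t−1})+σ₂q)]^{1−d_t} dF(q)`. -/
theorem mle_likelihood_decomposition
    (T : ℕ) (hT : 1 ≤ T)
    (F : Measure ℝ) [IsProbabilityMeasure F]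
    (ν μ : Fin T → Measure ℝ)
    [∀ t, IsProbabilityMeasure (ν t)] [∀ t, IsProbabilityMeasure (μ t)]
    (σ₁ σ₂ : ℝ) (a : Fin T → ℝ) (c : Fin T → ℕ → ℝ)
    (ε ξ : Fin T → (ℝ × (Fin T → ℝ × ℝ)) → ℝ)
    (hε : ∀ (t : Fin T) ω, ε t ω = (ω.2 t).1 - σ₁ * ω.1)
    (hξ : ∀ (t : Fin T) ω, ξ t ω = (ω.2 t).2 - σ₂ * ω.1)
    (D : ℕ → (ℝ × (Fin T → ℝ × ℝ)) → ℕ)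
    (hD0 : ∀ ω, D 0 ω = 0)
    (hDt : ∀ (t : Fin T) ω,
      D ((t : ℕ) + 1) ω =
        if (D (t : ℕ) ω = 1 ∨ a t > ε t ω) ∧ c t (D (t : ℕ) ω) > ξ t ω then 1 else 0)
    (d : ℕ → ℕ) (hd0 : d 0 = 0)
    (hdbin : ∀ t : Fin T, d ((t : ℕ) + 1) = 0 ∨ d ((t : ℕ) + 1) = 1) :
    ((F.prod (Measure.pi fun t : Fin T => (ν t).prod (μ t)))
        {ω | ∀ t : Fin T, D ((t : ℕ) + 1) ω = d ((t : ℕ) + 1)}).toReal =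
      ∫ q, ∏ t : Fin T,
        ((ν t {e | e < a t + σ₁ * q}).toReal ^ (1 - d (t : ℕ)) *
            (μ t {v | v < c t (d (t : ℕ)) + σ₂ * q}).toReal) ^ d ((t : ℕ) + 1) *
          (1 - (ν t {e | e < a t + σ₁ * q}).toReal ^ (1 - d (t : ℕ)) *
            (μ t {v | v < c t (d (t : ℕ)) + σ₂ * q}).toReal) ^ (1 - d ((t : ℕ) + 1)) ∂F :=
  mle_likelihood_decomposition_general T F ν μ σ₁ σ₂ a c ε ξ hε hξ D hD0 hDt d hd0 hdbin
end
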